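/- For any tree T without isolated vertices, γ_gr^t(T) = 2·bc(T), where bc(T) is the minimum number of complete bipartite subgraphs needed to cover all edges of T; moreover bc(T) equals the vertex cover number β(T) of T. -/

import Mathlib

open SimpleGraph

/-- A legal open neighborhood sequence in `G`. -/
def IsOpenLegal {α : Type*} (G : SimpleGraph α) (L : List α) : Prop :=
  L.Nodup ∧ ∀ i : Fin L.length, ∃ w, G.Adj (L.get i) w ∧
    ∀ j : Fin L.length, j < i → ¬ G.Adj (L.get j) w

/-- The Grundy total domination number of `G`. -/
noncomputable def grundyT {α : Type*} (G : SimpleGraph α) : ℕ :=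
  sSup {n | ∃ L : List α, IsOpenLegal G L ∧ L.length = n}

/-- A legal closed neighborhood (dominating) sequence in `G`. -/
def IsClosedLegal {α : Type*} (G : SimpleGraph α) (L : List α) : Prop :=
  L.Nodup ∧ ∀ i : Fin L.length, ∃ w, (G.Adj (L.get i) w ∨ L.get i = w) ∧
    ∀ j : Fin L.length, j < i → ¬ (G.Adj (L.get j) w ∨ L.get j = w)

/-- The Grundy domination number of `G`. -/
noncomputable def grundyDom {α : Type*} (G : SimpleGraph α) : ℕ :=
  sSup {n | ∃ L : List α, IsClosedLegal G L ∧ L.length = n}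

/-- The direct (tensor) product of simple graphs. -/
def directProd {α β : Type*} (G : SimpleGraph α) (H : SimpleGraph β) : SimpleGraph (α × β) where
  Adj x y := G.Adj x.1 y.1 ∧ H.Adj x.2 y.2
  symm := ⟨fun _ _ h => ⟨h.1.symm, h.2.symm⟩⟩
  loopless := ⟨fun x h => G.loopless.irrefl x.1 h.1⟩

/-- The lexicographic product of simple graphs. -/
def lexProd {α β : Type*} (G : SimpleGraph α) (H : SimpleGraph β) : SimpleGraph (α × β) where
  Adj x y := G.Adj x.1 y.1 ∨ (x.1 = y.1 ∧ H.Adj x.2 y.2)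
  symm := ⟨by
    rintro x y (h | ⟨h1, h2⟩)
    · exact Or.inl h.symm
    · exact Or.inr ⟨h1.symm, h2.symm⟩⟩
  loopless := ⟨by
    rintro x (h | ⟨_, h⟩)
    · exact G.loopless.irrefl _ h
    · exact H.loopless.irrefl _ h⟩

/-- The strong product of simple graphs. -/
def strongProd {α β : Type*} (G : SimpleGraph α) (H : SimpleGraph β) : SimpleGraph (α × β) where
  Adj x y := (G.Adj x.1 y.1 ∧ x.2 = y.2) ∨ (x.1 = y.1 ∧ H.Adj x.2 y.2) ∨
    (G.Adj x.1 y.1 ∧ H.Adj x.2 y.2)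
  symm := ⟨by
    rintro x y (⟨h, e⟩ | ⟨e, h⟩ | ⟨h1, h2⟩)
    · exact Or.inl ⟨h.symm, e.symm⟩
    · exact Or.inr (Or.inl ⟨e.symm, h.symm⟩)
    · exact Or.inr (Or.inr ⟨h1.symm, h2.symm⟩)⟩
  loopless := ⟨by
    rintro x (⟨h, _⟩ | ⟨_, h⟩ | ⟨h, _⟩)
    · exact G.loopless.irrefl _ h
    · exact H.loopless.irrefl _ h
    · exact G.loopless.irrefl _ h⟩

/-- The minimum number of complete bipartite subgraphs of `G` covering all edges of `G`. -/
noncomputable def bc {α : Type*} (G : SimpleGraph α) : ℕ :=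
  sInf {k | ∃ A B : Fin k → Set α,
    (∀ i a b, a ∈ A i → b ∈ B i → G.Adj a b) ∧
    (∀ u v, G.Adj u v → ∃ i, (u ∈ A i ∧ v ∈ B i) ∨ (v ∈ A i ∧ u ∈ B i))}

/-- `aD G L` is the number of entries of `L` not adjacent to any earlier entry. -/
noncomputable def aD {α : Type*} (G : SimpleGraph α) (L : List α) : ℕ :=
  {i : Fin L.length | ∀ j : Fin L.length, j < i → ¬ G.Adj (L.get j) (L.get i)}.ncard

/-- The vertex cover number of `G`. -/
noncomputable def vertexCoverNum {α : Type*} (G : SimpleGraph α) : ℕ :=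
  sInf {n | ∃ S : Finset α, S.card = n ∧ ∀ u v, G.Adj u v → u ∈ S ∨ v ∈ S}

/-- The independence number of `G`. -/
noncomputable def indepNum {α : Type*} (G : SimpleGraph α) : ℕ :=
  sSup {n | ∃ S : Finset α, S.card = n ∧ ∀ u ∈ S, ∀ v ∈ S, ¬ G.Adj u v}

/-! An open legal sequence `L` injects into `S × Bool` for any vertex cover `S`: an entry in `S`
goes to itself, any other entry to its footprint, which lies in `S` since the edge to it is
covered. Hence `γ_gr^t ≤ 2β` for every graph. Conversely, if `u` is a leaf of a forest with
neighbour `v`, then `u, L, v` is legal in `G` whenever `L` is legal in `G` with the edges at `v`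
deleted, and deleting them lowers `β` by at most one; induction gives `γ_gr^t ≥ 2β`. Finally,
two vertices of a forest have at most one common neighbour, so every complete bipartite subgraph
is a star, and choosing its centre turns a biclique cover into a vertex cover of at most the same
size. -/

theorem isOpenLegal_append_singleton_iff {α : Type*} {G : SimpleGraph α} {L : List α} {x : α} :
    IsOpenLegal G (L ++ [x]) ↔
      IsOpenLegal G L ∧ x ∉ L ∧ ∃ w, G.Adj x w ∧ ∀ y ∈ L, ¬ G.Adj y w := by
  have get_left (i : Fin L.length) :
      (L ++ [x]).get (i.castLE (by simp)) = L.get i := by simp [List.getElem_append_left]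
  have get_last : (L ++ [x]).get (Fin.last L.length |>.cast (by simp)) = x := by simp
  simp only [IsOpenLegal, List.nodup_append, List.nodup_singleton, List.mem_singleton, true_and]
  constructor
  · rintro ⟨⟨hnd, hxL⟩, hleg⟩
    refine ⟨⟨hnd, fun i => ?_⟩, fun h => hxL x h x rfl rfl, ?_⟩
    · obtain ⟨w, hw, hpre⟩ := hleg (i.castLE (by simp))
      refine ⟨w, by simpa [get_left] using hw, fun j hj => ?_⟩
      simpa [get_left] using hpre (j.castLE (by simp)) hj
    · obtain ⟨w, hw, hpre⟩ := hleg (Fin.last L.length |>.cast (by simp))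
      refine ⟨w, by simpa [get_last] using hw, fun y hy => ?_⟩
      obtain ⟨j, rfl⟩ := List.get_of_mem hy
      simpa [get_left] using hpre (j.castLE (by simp)) (by simp [Fin.lt_def])
  · rintro ⟨⟨hnd, hleg⟩, hxL, w, hxw, hw⟩
    refine ⟨⟨hnd, fun y hy _ hx hy' => hxL (by subst_vars; exact hy)⟩,
      fun ⟨i, hi⟩ => ?_⟩
    have get_lt {k : ℕ} (hk : k < L.length) :
        (L ++ [x]).get ⟨k, by simp; omega⟩ = L.get ⟨k, hk⟩ := by
      simp [List.getElem_append_left hk]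
    rcases Nat.lt_succ_iff_lt_or_eq.mp (by simpa using hi) with hi | rfl
    · obtain ⟨w', hw', hpre⟩ := hleg ⟨i, hi⟩
      refine ⟨w', by rwa [get_lt hi], fun ⟨j, hj⟩ hji => ?_⟩
      have hj' : j < L.length := by simp [Fin.lt_def] at hji; omega
      rw [get_lt hj']
      exact hpre ⟨j, hj'⟩ hji
    · refine ⟨w, by simpa using hxw, fun ⟨j, hj⟩ hji => ?_⟩
      have hj' : j < L.length := by simpa [Fin.lt_def] using hji
      rw [get_lt hj']
      exact hw _ (List.get_mem L _)

namespace IsOpenLegal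

variable {α : Type*} {G : SimpleGraph α} {L : List α} {u v x : α}

theorem nil (G : SimpleGraph α) : IsOpenLegal G [] :=
  ⟨List.nodup_nil, fun i => i.elim0⟩

theorem exists_adj_of_mem (hL : IsOpenLegal G L) (hx : x ∈ L) : ∃ w, G.Adj x w := by
  obtain ⟨i, rfl⟩ := List.get_of_mem hx
  obtain ⟨w, hw, -⟩ := hL.2 i
  exact ⟨w, hw⟩

theorem cons_of_deleteIncidenceSet (hL : IsOpenLegal (G.deleteIncidenceSet v) L)
    (huv : G.Adj u v) (hu : ∀ w, G.Adj u w → w = v) : IsOpenLegal G (u :: L) := by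
  induction L using List.reverseRecOn with
  | nil => exact isOpenLegal_append_singleton_iff.mpr ⟨nil G, by simp, v, huv, by simp⟩
  | append_singleton L x ih =>
    obtain ⟨hL, hxL, w, hxw, hw⟩ := isOpenLegal_append_singleton_iff.mp hL
    rw [G.deleteIncidenceSet_adj] at hxw
    rw [← List.cons_append, isOpenLegal_append_singleton_iff]
    refine ⟨ih hL, ?_, w, hxw.1, ?_⟩
    · rw [List.mem_cons]
      rintro (rfl | hx)
      · exact hxw.2.2 (hu w hxw.1)
      · exact hxL hx
    · intro y hy hyw
      rcases List.mem_cons.mp hy with rfl | hy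
      · exact hxw.2.2 (hu w hyw)
      · obtain ⟨z, hz⟩ := hL.exists_adj_of_mem hy
        exact hw y hy
          (G.deleteIncidenceSet_adj.mpr ⟨hyw, (G.deleteIncidenceSet_adj.mp hz).2.1, hxw.2.2⟩)

theorem cons_append_of_deleteIncidenceSet (hL : IsOpenLegal (G.deleteIncidenceSet v) L)
    (huv : G.Adj u v) (hu : ∀ w, G.Adj u w → w = v) : IsOpenLegal G (u :: L ++ [v]) := by
  have hvL : v ∉ L := fun hv => by
    obtain ⟨z, hz⟩ := hL.exists_adj_of_mem hv
    exact (G.deleteIncidenceSet_adj.mp hz).2.1 rfl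
  refine isOpenLegal_append_singleton_iff.mpr
    ⟨hL.cons_of_deleteIncidenceSet huv hu, ?_, u, huv.symm, ?_⟩
  · rw [List.mem_cons]
    rintro (rfl | hv)
    · exact huv.ne rfl
    · exact hvL hv
  · intro y hy hyu
    rcases List.mem_cons.mp hy with rfl | hy
    · exact hyu.ne rfl
    · exact hvL (hu y hyu.symm ▸ hy)

theorem length_le_two_mul_card (hL : IsOpenLegal G L) {S : Finset α}
    (hS : G.IsVertexCover S) : L.length ≤ 2 * S.card := by
  classical
  obtain ⟨hnd, hleg⟩ := hL
  choose w hw hpre using hleg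
  let f : Fin L.length → α × Bool :=
    fun i => if L.get i ∈ S then (L.get i, false) else (w i, true)
  have hf_mem (i : Fin L.length) : f i ∈ S ×ˢ (Finset.univ : Finset Bool) := by
    by_cases h : L.get i ∈ S
    · simp only [f, if_pos h, Finset.mem_product, Finset.mem_univ, and_true]
      exact h
    · simp only [f, if_neg h, Finset.mem_product, Finset.mem_univ, and_true]
      exact (hS (hw i)).resolve_left h
  have hf_ne {i j : Fin L.length} (hij : i < j) : f i ≠ f j := by
    intro heq
    simp only [f] at heq
    split_ifs at heq <;>
      simp only [Prod.mk.injEq, Bool.false_eq_true, Bool.true_eq_false, and_false, and_true] at heq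
    · exact hij.ne (List.nodup_iff_injective_get.mp hnd heq)
    · exact hpre j i hij (heq ▸ hw i)
  have hf_inj : Function.Injective f := fun i j heq => by
    rcases lt_trichotomy i j with h | h | h
    · exact absurd heq (hf_ne h)
    · exact h
    · exact absurd heq.symm (hf_ne h)
  simpa [mul_comm] using
    Finset.card_le_card_of_injOn (s := Finset.univ) f (fun i _ => hf_mem i) hf_inj.injOn

end IsOpenLegal

section VertexCover

variable {α : Type*} {G : SimpleGraph α}

theorem vertexCoverNum_le_card {S : Finset α} (hS : G.IsVertexCover S) :
    _root_.vertexCoverNum G ≤ S.card :=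
  Nat.sInf_le ⟨S, rfl, fun _ _ h => hS h⟩

theorem exists_isVertexCover_card_eq_vertexCoverNum [Finite α] (G : SimpleGraph α) :
    ∃ S : Finset α, G.IsVertexCover S ∧ S.card = _root_.vertexCoverNum G := by
  have := Fintype.ofFinite α
  obtain ⟨S, hS, hcover⟩ := Nat.sInf_mem
    (s := {n | ∃ S : Finset α, S.card = n ∧ ∀ u v, G.Adj u v → u ∈ S ∨ v ∈ S})
    ⟨_, Finset.univ, rfl, fun u _ _ => Or.inl (Finset.mem_univ u)⟩
  exact ⟨S, fun u v h => hcover u v h, hS⟩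

theorem vertexCoverNum_le_vertexCoverNum_deleteIncidenceSet_add_one [Finite α] (v : α) :
    _root_.vertexCoverNum G ≤ _root_.vertexCoverNum (G.deleteIncidenceSet v) + 1 := by
  classical
  obtain ⟨S, hS, hcard⟩ := exists_isVertexCover_card_eq_vertexCoverNum (G.deleteIncidenceSet v)
  have hcover : G.IsVertexCover ↑(insert v S) := fun x y hxy => by
    by_cases hx : x = v
    · simp [hx]
    by_cases hy : y = v
    · simp [hy]
    simpa [hx, hy] using hS (G.deleteIncidenceSet_adj.mpr ⟨hxy, hx, hy⟩)
  calc _root_.vertexCoverNum G ≤ (insert v S).card := vertexCoverNum_le_card hcover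
    _ ≤ S.card + 1 := Finset.card_insert_le v S
    _ = _ := by rw [hcard]

theorem IsOpenLegal.length_le_two_mul_vertexCoverNum [Finite α] {L : List α}
    (hL : IsOpenLegal G L) : L.length ≤ 2 * _root_.vertexCoverNum G := by
  obtain ⟨S, hS, hcard⟩ := exists_isVertexCover_card_eq_vertexCoverNum G
  exact hcard ▸ hL.length_le_two_mul_card hS

end VertexCover

namespace SimpleGraph

variable {α : Type*} {G : SimpleGraph α}

def IsBicliqueCover (G : SimpleGraph α) {k : ℕ} (A B : Fin k → Set α) : Prop :=
  (∀ i a b, a ∈ A i → b ∈ B i → G.Adj a b) ∧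
    ∀ u v, G.Adj u v → ∃ i, (u ∈ A i ∧ v ∈ B i) ∨ (v ∈ A i ∧ u ∈ B i)

theorem IsBicliqueCover.bc_le {k : ℕ} {A B : Fin k → Set α} (h : G.IsBicliqueCover A B) :
    bc G ≤ k :=
  Nat.sInf_le ⟨A, B, h⟩

theorem IsVertexCover.exists_isBicliqueCover {S : Finset α} (hS : G.IsVertexCover S) :
    ∃ A B : Fin S.card → Set α, G.IsBicliqueCover A B := by
  refine ⟨fun i => {(S.equivFin.symm i : α)}, fun i => G.neighborSet (S.equivFin.symm i),
    ?_, ?_⟩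
  · rintro i a b rfl hb
    exact hb
  · intro u v huv
    rcases hS huv with hu | hv
    · exact ⟨S.equivFin ⟨u, hu⟩, Or.inl ⟨by simp, by simpa using huv⟩⟩
    · exact ⟨S.equivFin ⟨v, hv⟩, Or.inr ⟨by simp, by simpa using huv.symm⟩⟩

theorem bc_le_vertexCoverNum [Finite α] (G : SimpleGraph α) :
    bc G ≤ _root_.vertexCoverNum G := by
  obtain ⟨S, hS, hcard⟩ := exists_isVertexCover_card_eq_vertexCoverNum G
  obtain ⟨A, B, hAB⟩ := hS.exists_isBicliqueCover
  exact hcard ▸ hAB.bc_le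

theorem exists_isBicliqueCover_bc [Finite α] (G : SimpleGraph α) :
    ∃ A B : Fin (bc G) → Set α, G.IsBicliqueCover A B := by
  obtain ⟨S, hS, -⟩ := exists_isVertexCover_card_eq_vertexCoverNum G
  exact Nat.sInf_mem (s := {k | ∃ A B : Fin k → Set α, G.IsBicliqueCover A B})
    ⟨S.card, hS.exists_isBicliqueCover⟩

namespace IsAcyclic

theorem exists_adj_forall_adj_eq [Finite α] (hG : G.IsAcyclic) (hne : G ≠ ⊥) :
    ∃ u v, G.Adj u v ∧ ∀ w, G.Adj u w → w = v := by
  obtain ⟨a, b, hab⟩ := ne_bot_iff_exists_adj.mp hne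
  have : Nonempty α := ⟨a⟩
  obtain ⟨u, v, p, hp, hlongest⟩ := Walk.exists_isPath_forall_isPath_length_le_length G
  have hnil : ¬ p.Nil := fun h => by
    have := hlongest a b (Walk.cons hab .nil) (by simp [hab.ne])
    simp [Walk.length_eq_zero_iff.mpr h] at this
  refine ⟨u, p.snd, p.adj_snd hnil, fun w huw => hG.eq_snd_of_adj_start hp huw ?_⟩
  by_contra hw
  have := hlongest w v (p.cons huw.symm) (hp.cons hw)
  simp at this

theorem eq_of_adj_of_adj {a a' b b' : α} (hG : G.IsAcyclic) (ha : a ≠ a')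
    (hab : G.Adj a b) (hba' : G.Adj b a') (hab' : G.Adj a b') (hb'a' : G.Adj b' a') : b = b' := by
  have hp : (Walk.cons hab (Walk.cons hba' .nil)).IsPath := by simp [hab.ne, hba'.ne, ha]
  have hq : (Walk.cons hab' (Walk.cons hb'a' .nil)).IsPath := by simp [hab'.ne, hb'a'.ne, ha]
  have := congrArg (fun p : G.Path a a' => p.1.support)
    ((hG.subsingleton_path a a').elim ⟨_, hp⟩ ⟨_, hq⟩)
  simpa using this

theorem subsingleton_or_subsingleton_of_forall_adj (hG : G.IsAcyclic) {A B : Set α}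
    (hAB : ∀ a ∈ A, ∀ b ∈ B, G.Adj a b) : A.Subsingleton ∨ B.Subsingleton := by
  by_contra! h
  obtain ⟨⟨a, ha, a', ha', hne⟩, ⟨b, hb, b', hb', hbb'⟩⟩ := h
  exact hbb' (hG.eq_of_adj_of_adj hne (hAB a ha b hb) (hAB a' ha' b hb).symm (hAB a ha b' hb')
    (hAB a' ha' b' hb').symm)

theorem vertexCoverNum_le_of_isBicliqueCover {k : ℕ} {A B : Fin k → Set α} (hG : G.IsAcyclic)
    (h : G.IsBicliqueCover A B) : _root_.vertexCoverNum G ≤ k := by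
  classical
  have hstar (i : Fin k) : ∃ s : Finset α, s.card ≤ 1 ∧ (A i ⊆ s ∨ B i ⊆ s) := by
    have hsub (C : Set α) (hC : C.Subsingleton) : ∃ s : Finset α, s.card ≤ 1 ∧ C ⊆ s := by
      rcases hC.eq_empty_or_singleton with rfl | ⟨x, rfl⟩
      · exact ⟨∅, by simp, by simp⟩
      · exact ⟨{x}, by simp, by simp⟩
    rcases hG.subsingleton_or_subsingleton_of_forall_adj (fun a ha b hb => h.1 i a b ha hb)
      with hA | hB
    · obtain ⟨s, hs, hAs⟩ := hsub _ hA
      exact ⟨s, hs, .inl hAs⟩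
    · obtain ⟨s, hs, hBs⟩ := hsub _ hB
      exact ⟨s, hs, .inr hBs⟩
  choose s hs_card hs_sub using hstar
  have hcover : G.IsVertexCover ↑(Finset.univ.biUnion s) := fun u v huv => by
    obtain ⟨i, hi⟩ := h.2 u v huv
    simp only [Finset.coe_biUnion, Finset.coe_univ, Set.mem_univ, Set.iUnion_true, Set.mem_iUnion]
    rcases hs_sub i with hA | hB <;> rcases hi with ⟨hu, hv⟩ | ⟨hv, hu⟩
    exacts [.inl ⟨i, hA hu⟩, .inr ⟨i, hA hv⟩, .inr ⟨i, hB hv⟩, .inl ⟨i, hB hu⟩]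
  calc _root_.vertexCoverNum G ≤ (Finset.univ.biUnion s).card := vertexCoverNum_le_card hcover
    _ ≤ ∑ i, (s i).card := Finset.card_biUnion_le
    _ ≤ ∑ _i : Fin k, 1 := Finset.sum_le_sum fun i _ => hs_card i
    _ = k := by simp

theorem bc_eq_vertexCoverNum [Finite α] (hG : G.IsAcyclic) : bc G = _root_.vertexCoverNum G := by
  obtain ⟨A, B, hAB⟩ := exists_isBicliqueCover_bc G
  exact (bc_le_vertexCoverNum G).antisymm (hG.vertexCoverNum_le_of_isBicliqueCover hAB)

theorem exists_isOpenLegal_two_mul_vertexCoverNum_le [Finite α] (hG : G.IsAcyclic) :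
    ∃ L, IsOpenLegal G L ∧ 2 * _root_.vertexCoverNum G ≤ L.length := by
  induction G using WellFoundedLT.induction with
  | ind G ih =>
  by_cases hbot : G = ⊥
  · subst hbot
    refine ⟨[], .nil ⊥, ?_⟩
    simpa using vertexCoverNum_le_card (G := ⊥) (S := ∅) (by simp)
  obtain ⟨u, v, huv, hu⟩ := hG.exists_adj_forall_adj_eq hbot
  have hlt : G.deleteIncidenceSet v < G :=
    lt_of_le_of_ne (G.deleteIncidenceSet_le v) fun h =>
      (G.deleteIncidenceSet_adj.mp (h ▸ huv)).2.2 rfl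
  obtain ⟨L, hL, hlen⟩ := ih _ hlt (hG.anti (G.deleteIncidenceSet_le v))
  refine ⟨u :: L ++ [v], hL.cons_append_of_deleteIncidenceSet huv hu, ?_⟩
  have := vertexCoverNum_le_vertexCoverNum_deleteIncidenceSet_add_one (G := G) v
  simp only [List.length_append, List.length_cons]
  omega

theorem grundyT_eq_two_mul_vertexCoverNum [Finite α] (hG : G.IsAcyclic) :
    grundyT G = 2 * _root_.vertexCoverNum G := by
  obtain ⟨L, hL, hlen⟩ := hG.exists_isOpenLegal_two_mul_vertexCoverNum_le
  refine IsGreatest.csSup_eq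
    ⟨⟨L, hL, le_antisymm hL.length_le_two_mul_vertexCoverNum hlen⟩, ?_⟩
  rintro n ⟨L', hL', rfl⟩
  exact hL'.length_le_two_mul_vertexCoverNum

end IsAcyclic

end SimpleGraph

theorem grundyT_tree_eq_two_bc_general {α : Type*} [Fintype α]
    (T : SimpleGraph α) (hT : T.IsTree) :
    grundyT T = 2 * bc T ∧ bc T = _root_.vertexCoverNum T := by
  have hbc := hT.isAcyclic.bc_eq_vertexCoverNum
  exact ⟨hbc ▸ hT.isAcyclic.grundyT_eq_two_mul_vertexCoverNum, hbc⟩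

theorem grundyT_tree_eq_two_bc {α : Type*} [Fintype α]
    (T : SimpleGraph α) (hT : T.IsTree) (hiso : ∀ v, ∃ w, T.Adj v w) :
    grundyT T = 2 * bc T ∧ bc T = _root_.vertexCoverNum T :=
  grundyT_tree_eq_two_bc_general T hT
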